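/- arXiv:2410.09458 — 6 statements merged into one kernel-verified Lean document; each statement's English description precedes it below -/
import Mathlib

section
/- With the configuration (v_1, …, v_{2m+1}) and the transformed tuple (v′_1, …, v′_{2m}) as in the context, let ı be any strictly increasing m-tuple with entries in {1, …, 2m} such that: if 2 is an entry of ı then so is 1, and if m+2 is an entry of ı then so is m+1. Let w(ı) be the strictly increasing m-tuple obtained from ı by applying to each entry the permutation that swaps 1 ↔ 2 and swaps (m+1) ↔ (m+2). Then Δ_ı(v′) = Δ_{w(ı)}(v). -/
/-- The determinant of the `m × m` matrix whose columns are `u 0, …, u (m-1)`. -/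
noncomputable def cdet {m : ℕ} (u : Fin m → Fin m → ℂ) : ℂ :=
  (Matrix.of fun i j => u j i).det

/-- `w_1 := det(v_1, v_3, v_4, …, v_{m+1}) • v_2 − v_1`. -/
noncomputable def w1 (m : ℕ) (v : ℕ → Fin m → ℂ) : Fin m → ℂ :=
  cdet (fun t : Fin m => if (t : ℕ) = 0 then v 1 else v ((t : ℕ) + 2)) • v 2 - v 1

/-- `w_{m+1} := det(v_{m+1}, v_{m+3}, v_{m+4}, …, v_{2m+1}) • v_{m+2} − v_{m+1}`. -/
noncomputable def wm1 (m : ℕ) (v : ℕ → Fin m → ℂ) : Fin m → ℂ :=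
  cdet (fun t : Fin m => if (t : ℕ) = 0 then v (m + 1) else v (m + 2 + (t : ℕ))) • v (m + 2)
    - v (m + 1)

/-- The transformed tuple `v′`:  `v′_1 := v_2`, `v′_2 := w_1`, `v′_k := v_k` for
`3 ≤ k ≤ m`, `v′_{m+1} := v_{m+2}`, `v′_{m+2} := w_{m+1}`, and `v′_k := v_k` otherwise. -/
noncomputable def vtr (m : ℕ) (v : ℕ → Fin m → ℂ) : ℕ → Fin m → ℂ := fun k =>
  if k = 1 then v 2
  else if k = 2 then w1 m v
  else if k = m + 1 then v (m + 2)
  else if k = m + 2 then wm1 m v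
  else v k

/-!
The tuple `v′` arises from `v` by the operation `(u_p, u_{p+1}) ↦ (u_{p+1}, a • u_{p+1} - u_p)`
on the two disjoint adjacent pairs `p = 1` and `p = m + 1`. On a minor containing both columns
`p, p + 1` this is a row swap followed by a shear, so the minor is unchanged; on a minor
containing `p` but not `p + 1` it just relabels `u_{p+1}` as column `p`, and since the pair is
adjacent the relabelled tuple is still increasing.
-/

def pairMove {ι R M : Type*} [DecidableEq ι] [SMul R M] [Sub M] (i j : ι) (a : R) (g : ι → M) :
    ι → M :=
  fun t => if t = i then g j else if t = j then a • g j - g i else g t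

theorem pairMove_comp {ι κ R M : Type*} [DecidableEq ι] [DecidableEq κ] [SMul R M] [Sub M]
    {e : κ → ι} (he : Function.Injective e) (i j : κ) (a : R) (g : ι → M) :
    pairMove (e i) (e j) a g ∘ e = pairMove i j a (g ∘ e) := by
  funext t
  simp [pairMove, he.eq_iff]

theorem Matrix.det_of_pairMove {n R : Type*} [Fintype n] [DecidableEq n] [CommRing R]
    (M : Matrix n n R) {i j : n} (hij : i ≠ j) (a : R) :
    (Matrix.of (pairMove i j a M)).det = M.det := by
  set M' := M.updateRow i (M j)
  have hmove : Matrix.of (pairMove i j a M) = M'.updateRow j (a • M j + (-1 : R) • M i) := by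
    ext t k
    by_cases hti : t = i
    · subst hti; simp [pairMove, M', hij]
    · by_cases htj : t = j
      · subst htj; simp [pairMove, M', hti, sub_eq_add_neg]
      · simp [pairMove, M', hti, htj]
  have hrepeat : (M'.updateRow j (M j)).det = 0 :=
    Matrix.det_zero_of_row_eq hij (by simp [M', hij])
  have hswap : M'.updateRow j (M i) = M.submatrix (Equiv.swap i j) id := by
    ext t k
    by_cases hti : t = i
    · subst hti; simp [M', hij]
    · by_cases htj : t = j
      · subst htj; simp [M']
      · simp [M', hti, htj, Equiv.swap_apply_of_ne_of_ne]
  rw [hmove, Matrix.det_updateRow_add, Matrix.det_updateRow_smul, Matrix.det_updateRow_smul,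
    hrepeat, hswap, Matrix.det_permute, Equiv.Perm.sign_swap hij]
  simp

theorem cdet_eq_det {m : ℕ} (u : Fin m → Fin m → ℂ) : cdet u = (Matrix.of u).det :=
  Matrix.det_transpose (Matrix.of u)

open Classical in
/-- For increasing `idx` with `p + 1 ∈ range idx → p ∈ range idx`, the increasing enumeration
of `Equiv.swap p (p + 1) '' Set.range idx`. -/
noncomputable def sortedAdjSwap {ι : Type*} (p : ℕ) (idx : ι → ℕ) : ι → ℕ :=
  fun t => if idx t = p ∧ p + 1 ∉ Set.range idx then p + 1 else idx t

section sortedAdjSwap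

variable {ι : Type*} {p : ℕ} {idx : ι → ℕ}

theorem sortedAdjSwap_of_mem (h : p + 1 ∈ Set.range idx) :
    sortedAdjSwap p idx = idx := by
  funext t
  simp [sortedAdjSwap, h]

theorem strictMono_sortedAdjSwap [Preorder ι] (hidx : StrictMono idx) :
    StrictMono (sortedAdjSwap p idx) := by
  intro s t hst
  have hlt := hidx hst
  simp only [sortedAdjSwap]
  split_ifs with hs ht ht
  · omega
  · have : idx t ≠ p + 1 := fun h => hs.2 ⟨t, h⟩
    omega
  · omega
  · exact hlt

theorem range_sortedAdjSwap (hpair : p + 1 ∈ Set.range idx → p ∈ Set.range idx) :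
    Set.range (sortedAdjSwap p idx) = Equiv.swap p (p + 1) '' Set.range idx := by
  ext x
  rw [Set.mem_image_equiv, Equiv.symm_swap, Equiv.swap_apply_def]
  simp only [Set.mem_range, sortedAdjSwap] at hpair ⊢
  grind

end sortedAdjSwap

theorem cdet_pairMove_comp {m : ℕ} (f : ℕ → Fin m → ℂ) (a : ℂ) {p : ℕ} {idx : Fin m → ℕ}
    (hidx : Function.Injective idx) (hpair : p + 1 ∈ Set.range idx → p ∈ Set.range idx) :
    cdet (pairMove p (p + 1) a f ∘ idx) = cdet (f ∘ sortedAdjSwap p idx) := by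
  by_cases hsucc : p + 1 ∈ Set.range idx
  · obtain ⟨i, hi⟩ := hpair hsucc
    obtain ⟨j, hj⟩ := hsucc
    have hij : i ≠ j := fun h => by subst h; omega
    rw [sortedAdjSwap_of_mem ⟨j, hj⟩, ← hj, ← hi, pairMove_comp hidx, cdet_eq_det, cdet_eq_det]
    exact Matrix.det_of_pairMove _ hij a
  · congr 1
    funext t
    have : idx t ≠ p + 1 := fun h => hsucc ⟨t, h⟩
    by_cases hp : idx t = p <;> simp [pairMove, sortedAdjSwap, hsucc, hp, this]

theorem cdet_pairMove_comp_of_range_eq {m : ℕ} (f : ℕ → Fin m → ℂ) (a : ℂ) {p : ℕ}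
    {idx widx : Fin m → ℕ} (hidx : StrictMono idx) (hwidx : StrictMono widx)
    (hpair : p + 1 ∈ Set.range idx → p ∈ Set.range idx)
    (hrange : Set.range widx = Equiv.swap p (p + 1) '' Set.range idx) :
    cdet (pairMove p (p + 1) a f ∘ idx) = cdet (f ∘ widx) := by
  have hw : sortedAdjSwap p idx = widx :=
    ((strictMono_sortedAdjSwap hidx).range_inj hwidx).mp
      ((range_sortedAdjSwap hpair).trans hrange.symm)
  rw [cdet_pairMove_comp f a hidx.injective hpair, hw]

theorem vtr_eq_pairMove {m : ℕ} (hm : 2 ≤ m) (v : ℕ → Fin m → ℂ) :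
    ∃ a b : ℂ, vtr m v = pairMove (m + 1) (m + 1 + 1) b (pairMove 1 (1 + 1) a v) := by
  refine ⟨cdet fun t : Fin m => if (t : ℕ) = 0 then v 1 else v ((t : ℕ) + 2),
    cdet fun t : Fin m => if (t : ℕ) = 0 then v (m + 1) else v (m + 2 + (t : ℕ)),
    funext fun k => ?_⟩
  simp only [vtr, pairMove, w1, wm1]
  split_ifs <;> first | rfl | omega

theorem ite_perm_eq_swap_comp_swap (m : ℕ) (hm : 2 ≤ m) :
    (fun a => if a = 1 then 2 else if a = 2 then 1
        else if a = m + 1 then m + 2 else if a = m + 2 then m + 1 else a) =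
      Equiv.swap 1 (1 + 1) ∘ Equiv.swap (m + 1) (m + 1 + 1) := by
  funext k
  simp only [Function.comp_apply, Equiv.swap_apply_def]
  split_ifs <;> omega

theorem stmt_5_general (m : ℕ) (hm : 2 ≤ m) (v : ℕ → Fin m → ℂ)
    (idx : Fin m → ℕ) (hmono : StrictMono idx)
    (h12 : (∃ t, idx t = 2) → ∃ t, idx t = 1)
    (hm12 : (∃ t, idx t = m + 2) → ∃ t, idx t = m + 1)
    (widx : Fin m → ℕ) (hwmono : StrictMono widx)
    (hwset : Set.range widx =
      (fun a => if a = 1 then 2 else if a = 2 then 1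
        else if a = m + 1 then m + 2 else if a = m + 2 then m + 1 else a) '' Set.range idx) :
    cdet (fun t => vtr m v (idx t)) = cdet (fun t => v (widx t)) := by
  obtain ⟨a, b, hvtr⟩ := vtr_eq_pairMove hm v
  have hrange := range_sortedAdjSwap (p := m + 1) hm12
  have hpair : 1 + 1 ∈ Set.range (sortedAdjSwap (m + 1) idx) →
      1 ∈ Set.range (sortedAdjSwap (m + 1) idx) := by
    simp only [hrange, Set.mem_image_equiv, Equiv.symm_swap]
    rw [Equiv.swap_apply_of_ne_of_ne (by omega) (by omega),
      Equiv.swap_apply_of_ne_of_ne (by omega) (by omega)]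
    exact h12
  calc cdet (fun t => vtr m v (idx t))
      = cdet (pairMove 1 (1 + 1) a v ∘ sortedAdjSwap (m + 1) idx) := by
        rw [hvtr]; exact cdet_pairMove_comp _ b hmono.injective hm12
    _ = cdet (fun t => v (widx t)) :=
        cdet_pairMove_comp_of_range_eq v a (strictMono_sortedAdjSwap hmono) hwmono hpair
          (by rw [hwset, hrange, ite_perm_eq_swap_comp_swap m hm, Set.image_comp])

/-- (Lemma 4.3(i) of the paper, generic case.)  With the configuration
`v` (all consecutive minors `det(v_j, …, v_{j+m−1}) = 1` for `1 ≤ j ≤ m+2`) and the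
transformed tuple `v′ = vtr m v`, let `ı` be a strictly increasing `m`-tuple with entries
in `{1, …, 2m}` such that `2 ∈ ı → 1 ∈ ı` and `m+2 ∈ ı → m+1 ∈ ı`.  If `wı` is the
strictly increasing `m`-tuple whose entry set is obtained from that of `ı` by applying
the permutation `1 ↔ 2`, `(m+1) ↔ (m+2)`, then `Δ_ı(v′) = Δ_{wı}(v)`. -/
theorem stmt_5 (m : ℕ) (hm : 2 ≤ m) (v : ℕ → Fin m → ℂ)
    (hv : ∀ j, 1 ≤ j → j ≤ m + 2 → cdet (fun t : Fin m => v (j + (t : ℕ))) = 1)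
    (idx : Fin m → ℕ) (hmono : StrictMono idx)
    (hrange : ∀ t, 1 ≤ idx t ∧ idx t ≤ 2 * m)
    (h12 : (∃ t, idx t = 2) → ∃ t, idx t = 1)
    (hm12 : (∃ t, idx t = m + 2) → ∃ t, idx t = m + 1)
    (widx : Fin m → ℕ) (hwmono : StrictMono widx)
    (hwset : Set.range widx =
      (fun a => if a = 1 then 2 else if a = 2 then 1
        else if a = m + 1 then m + 2 else if a = m + 2 then m + 1 else a) '' Set.range idx) :
    cdet (fun t => vtr m v (idx t)) = cdet (fun t => v (widx t)) :=
  stmt_5_general m hm v idx hmono h12 hm12 widx hwmono hwset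
end

section
/- With the configuration (v_1, …, v_{2m+1}) and the transformed tuple (v′_1, …, v′_{2m}) as in the context, assume m ≥ 3 and let a ∈ {1, …, m−2}. Then Δ_ı(v′) = Δ_ȷ(v), where ı is the strictly increasing m-tuple with entry set {2, …, a+1} ∪ {a+3, …, m+2} and ȷ is the strictly increasing m-tuple with entry set {1, …, a+1} ∪ {a+3, …, m+1}. -/
/-!
Expanding `w_{m+1}` and then `w_1` by multilinearity (the `v_{m+2}`-part of `w_{m+1}` dies against
the column `v_{m+2}`) turns `Δ_ı(v′)` into `c Δ_ı(v) - Δ_ı(v)[v_2 ↦ v_1]` with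
`c = det(v_1, v_3, …, v_{m+1})`. This and `Δ_ȷ(v)` are both linear in `v_1`, and `v_2, …, v_{m+1}`
is a basis because its determinant is `1`. So it suffices to compare them at `v_1 = v_k`: all terms
then have a repeated column except for `k = 2` and `k = a + 2`, where the normalisations
`det(v_2, …, v_{m+1}) = det(v_3, …, v_{m+2}) = 1` and a cyclic reordering of columns finish.
-/

open Function Module

section
variable {m : ℕ}

theorem cdet_eq_basisFun_det (u : Fin m → Fin m → ℂ) :
    cdet u = (Pi.basisFun ℂ (Fin m)).det u := by
  rw [Basis.det_apply]
  rfl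

theorem cdet_eq_zero_of_eq {u : Fin m → Fin m → ℂ} {i j : Fin m} (h : u i = u j) (hij : i ≠ j) :
    cdet u = 0 := by
  rw [cdet_eq_basisFun_det]
  exact AlternatingMap.map_eq_zero_of_eq _ u h hij

theorem cdet_update_eq_zero {u : Fin m → Fin m → ℂ} {i j : Fin m} {x : Fin m → ℂ}
    (hx : u j = x) (hji : j ≠ i) : cdet (update u i x) = 0 :=
  cdet_eq_zero_of_eq (i := i) (j := j) (by rw [update_self, update_of_ne hji, hx]) hji.symm

theorem cdet_comp_cycleRange (u : Fin m → Fin m → ℂ) (p : Fin m) :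
    cdet (u ∘ p.cycleRange) = (-1) ^ (p : ℕ) * cdet u := by
  simp only [cdet_eq_basisFun_det, AlternatingMap.map_perm, Fin.sign_cycleRange, Units.smul_def]
  simp

theorem cdet_update_smul_sub (u : Fin m → Fin m → ℂ) (i : Fin m) (c : ℂ) (x y : Fin m → ℂ) :
    cdet (update u i (c • x - y)) = c * cdet (update u i x) - cdet (update u i y) := by
  simp only [cdet_eq_basisFun_det, AlternatingMap.map_update_sub,
    AlternatingMap.map_update_smul, smul_eq_mul]

theorem cdet_update_smul_self_sub {u : Fin m → Fin m → ℂ} {i : Fin m} {x : Fin m → ℂ}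
    (hx : u i = x) (c : ℂ) (y : Fin m → ℂ) :
    cdet (update u i (c • x - y)) = c * cdet u - cdet (update u i y) := by
  rw [cdet_update_smul_sub, ← hx, update_eq_self]

/-- The column operation `(x, y) ↦ (y, c y - x)` has determinant one. -/
theorem cdet_update_update_smul_sub {u : Fin m → Fin m → ℂ} {i j : Fin m} (hij : i ≠ j)
    {x y : Fin m → ℂ} (hx : u i = x) (hy : u j = y) (c : ℂ) :
    cdet (update (update u i y) j (c • y - x)) = cdet u := by
  rw [cdet_update_smul_sub, cdet_update_eq_zero (j := i) (by rw [update_self]) hij, mul_zero,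
    zero_sub, ← hx, ← hy, ← Equiv.comp_swap_eq_update, cdet_eq_basisFun_det,
    cdet_eq_basisFun_det, AlternatingMap.map_swap _ _ hij.symm, neg_neg]

noncomputable def cdetUpdate (u : Fin m → Fin m → ℂ) (i : Fin m) : (Fin m → ℂ) →ₗ[ℂ] ℂ :=
  (Pi.basisFun ℂ (Fin m)).det.toMultilinearMap.toLinearMap u i

@[simp]
theorem cdetUpdate_apply (u : Fin m → Fin m → ℂ) (i : Fin m) (x : Fin m → ℂ) :
    cdetUpdate u i x = cdet (update u i x) :=
  (cdet_eq_basisFun_det _).symm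

theorem LinearMap.eq_zero_of_cdet_ne_zero {b : Fin m → Fin m → ℂ} (hb : cdet b ≠ 0)
    {f : (Fin m → ℂ) →ₗ[ℂ] ℂ} (hf : ∀ j, f (b j) = 0) : f = 0 := by
  rw [cdet_eq_basisFun_det] at hb
  exact LinearMap.ext_on_range ((Basis.is_basis_iff_det _).mpr hb.isUnit).2 (by simpa using hf)

end

def skipIdx (j s t : ℕ) : ℕ := if t < s then j + t else j + t + 1

theorem skipIdx_zero {j s : ℕ} (hs : 0 < s) : skipIdx j s 0 = j := by
  simp [skipIdx, hs]

section
variable {m : ℕ} [NeZero m] (v : ℕ → Fin m → ℂ)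

theorem cdet_update_zero_skipIdx_self {j s : ℕ} (hs : 0 < s) (hsm : s ≤ m) :
    cdet (update (fun t : Fin m => v (skipIdx j s t)) 0 (v (j + s)))
      = (-1) ^ (s - 1) * cdet (fun t : Fin m => v (j + 1 + t)) := by
  set p : Fin m := ⟨s - 1, by omega⟩
  have hcycle : update (fun t : Fin m => v (skipIdx j s t)) 0 (v (j + s)) ∘ p.cycleRange
      = fun t : Fin m => v (j + 1 + t) := by
    funext t
    have hp : (p : ℕ) = s - 1 := rfl
    rcases lt_trichotomy t p with h | rfl | h
    · have h' : (t : ℕ) < s - 1 := h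
      rw [comp_apply, update_of_ne (Fin.ne_of_val_ne (by
          rw [Fin.coe_cycleRange_of_lt h, Fin.val_zero]; omega)),
        Fin.coe_cycleRange_of_lt h, skipIdx, if_pos (by omega)]
      ring_nf
    · rw [comp_apply, Fin.cycleRange_self, update_self, hp]
      congr 1
      omega
    · have h' : s - 1 < (t : ℕ) := h
      rw [comp_apply, Fin.cycleRange_of_gt h,
        update_of_ne (Fin.ne_of_val_ne (by rw [Fin.val_zero]; omega)), skipIdx, if_neg (by omega)]
      ring_nf
  rw [← hcycle, cdet_comp_cycleRange, ← mul_assoc, ← pow_add, ← two_mul, pow_mul, neg_one_sq,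
    one_pow, one_mul]

theorem cdet_update_zero_skipIdx_eq_zero {j s n : ℕ} (hs : 0 < s) (hsm : s ≤ m) (hjn : j < n)
    (hnm : n ≤ j + m) (hns : n ≠ j + s) :
    cdet (update (fun t : Fin m => v (skipIdx j s t)) 0 (v n)) = 0 :=
  cdet_update_eq_zero (j := ⟨if n < j + s then n - j else n - j - 1, by split_ifs <;> omega⟩)
    (by simp only [skipIdx]; congr 1; split_ifs <;> omega)
    (by simp only [ne_eq, Fin.ext_iff, Fin.val_zero]; split_ifs <;> omega)

theorem plucker_form_eq_zero {a k : ℕ} (ha : 0 < a) (ham : a + 2 ≤ m) (hk : k < m)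
    (h2 : cdet (fun t : Fin m => v (2 + t)) = 1) (h3 : cdet (fun t : Fin m => v (3 + t)) = 1) :
    cdet (fun t : Fin m => v (skipIdx 2 a t)) * cdet (update (fun t : Fin m => v (2 + t)) 0 (v (2 + k)))
      - cdet (update (fun t : Fin m => v (skipIdx 2 a t)) 0 (v (2 + k)))
      - cdet (update (fun t : Fin m => v (skipIdx 1 (a + 1) t)) 0 (v (2 + k))) = 0 := by
  rcases Nat.eq_zero_or_pos k with rfl | hk0
  · rw [update_eq_self_iff.mpr (by simp only [Fin.val_zero]), h2,
      update_eq_self_iff.mpr (by simp only [Fin.val_zero, skipIdx_zero ha]),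
      cdet_update_zero_skipIdx_eq_zero v (by omega) (by omega) (by omega) (by omega) (by omega)]
    ring
  have hb : cdet (update (fun t : Fin m => v (2 + t)) 0 (v (2 + k))) = 0 :=
    cdet_update_eq_zero (j := ⟨k, hk⟩) rfl (Fin.ne_of_val_ne hk0.ne')
  rcases eq_or_ne k a with rfl | hka
  · rw [hb, cdet_update_zero_skipIdx_self v hk0 (by omega), h3, show 2 + k = 1 + (k + 1) by ring,
      cdet_update_zero_skipIdx_self v (by omega) (by omega), h2, Nat.add_sub_cancel,
      ← pow_sub_one_mul hk0.ne']
    ring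
  · rw [hb, cdet_update_zero_skipIdx_eq_zero v ha (by omega) (by omega) (by omega) (by omega),
      cdet_update_zero_skipIdx_eq_zero v (by omega) (by omega) (by omega) (by omega) (by omega)]
    ring

theorem plucker_relation_skipIdx {a : ℕ} (ha : 0 < a) (ham : a + 2 ≤ m)
    (h2 : cdet (fun t : Fin m => v (2 + t)) = 1) (h3 : cdet (fun t : Fin m => v (3 + t)) = 1) :
    cdet (update (fun t : Fin m => v (2 + t)) 0 (v 1)) * cdet (fun t : Fin m => v (skipIdx 2 a t))
      - cdet (update (fun t : Fin m => v (skipIdx 2 a t)) 0 (v 1))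
      = cdet (fun t : Fin m => v (skipIdx 1 (a + 1) t)) := by
  set b : Fin m → Fin m → ℂ := fun t => v (2 + t)
  set I : Fin m → Fin m → ℂ := fun t => v (skipIdx 2 a t)
  set J : Fin m → Fin m → ℂ := fun t => v (skipIdx 1 (a + 1) t)
  set Φ := cdet I • cdetUpdate b 0 - cdetUpdate I 0 - cdetUpdate J 0
  have hΦ : Φ = 0 :=
    LinearMap.eq_zero_of_cdet_ne_zero (b := b) (by rw [h2]; exact one_ne_zero) fun k => by
      simpa [Φ] using plucker_form_eq_zero v ha ham k.isLt h2 h3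
  have hJ : update J 0 (v 1) = J :=
    update_eq_self_iff.mpr <| by simp only [J, Fin.val_zero, skipIdx_zero (Nat.succ_pos a)]
  have hΦ1 := LinearMap.congr_fun hΦ (v 1)
  simp only [Φ, LinearMap.sub_apply, LinearMap.smul_apply, cdetUpdate_apply, smul_eq_mul,
    LinearMap.zero_apply, hJ] at hΦ1
  linear_combination hΦ1

theorem w1_eq : w1 m v = cdet (update (fun t : Fin m => v (2 + t)) 0 (v 1)) • v 2 - v 1 := by
  rw [w1]
  congr 3
  funext t
  rcases eq_or_ne t 0 with rfl | ht
  · simp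
  · rw [update_of_ne ht, if_neg (Fin.val_ne_zero_iff.mpr ht), add_comm]

theorem cdet_vtr_skipIdx {a : ℕ} (ha : 0 < a) (ham : a + 2 ≤ m) :
    cdet (fun t : Fin m => vtr m v (skipIdx 2 a t))
      = cdet (update (fun t : Fin m => v (skipIdx 2 a t)) 0 (w1 m v)) := by
  set G := update (fun t : Fin m => v (skipIdx 2 a t)) 0 (w1 m v)
  have hG : ∀ (t : Fin m) (n : ℕ), a ≤ t → t + 3 = n → G t = v n := fun t n ht hn => by
    rw [show G t = _ from update_of_ne (Fin.ne_of_val_ne (by rw [Fin.val_zero]; omega)) _ _,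
      skipIdx, if_neg (by omega)]
    congr 1
    omega
  have hvtr : (fun t : Fin m => vtr m v (skipIdx 2 a t))
      = update (update G ⟨m - 2, by omega⟩ (v (m + 2))) ⟨m - 1, by omega⟩ (wm1 m v) := by
    funext t
    simp only [G, vtr, update_apply, skipIdx, Fin.ext_iff, Fin.val_zero]
    split_ifs <;> first | rfl | omega
  rw [hvtr, wm1]
  exact cdet_update_update_smul_sub (Fin.ne_of_val_ne (by simp only; omega))
    (hG _ _ (by simp only; omega) (by simp only; omega))
    (hG _ _ (by simp only; omega) (by simp only; omega)) _

end

theorem stmt_6_general (m : ℕ) (a : ℕ) (ha1 : 1 ≤ a) (ha2 : a ≤ m - 2)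
    (v : ℕ → Fin m → ℂ)
    (hv : ∀ j, 1 ≤ j → j ≤ m + 2 → cdet (fun t : Fin m => v (j + (t : ℕ))) = 1) :
    cdet (fun t : Fin m => vtr m v (if (t : ℕ) < a then (t : ℕ) + 2 else (t : ℕ) + 3))
      = cdet (fun t : Fin m => v (if (t : ℕ) < a + 1 then (t : ℕ) + 1 else (t : ℕ) + 2)) := by
  have ham : a + 2 ≤ m := by omega
  have : NeZero m := ⟨by omega⟩
  have hI : ∀ t, (if t < a then t + 2 else t + 3) = skipIdx 2 a t := fun t => by
    unfold skipIdx; split_ifs <;> omega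
  have hJ : ∀ t, (if t < a + 1 then t + 1 else t + 2) = skipIdx 1 (a + 1) t := fun t => by
    unfold skipIdx; split_ifs <;> omega
  simp only [hI, hJ]
  rw [cdet_vtr_skipIdx v ha1 ham, w1_eq,
    cdet_update_smul_self_sub (by simp only [Fin.val_zero, skipIdx_zero ha1])]
  exact plucker_relation_skipIdx v ha1 ham (hv 2 (by omega) (by omega)) (hv 3 (by omega) (by omega))

/-- (Lemma 4.3(i), case A.)  With the configuration `v` and transformed
tuple `v′ = vtr m v` as above, `m ≥ 3`, `1 ≤ a ≤ m−2`:  `Δ_ı(v′) = Δ_ȷ(v)` where `ı` has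
entry set `{2,…,a+1} ∪ {a+3,…,m+2}` and `ȷ` has entry set `{1,…,a+1} ∪ {a+3,…,m+1}`. -/
theorem stmt_6 (m : ℕ) (hm : 3 ≤ m) (a : ℕ) (ha1 : 1 ≤ a) (ha2 : a ≤ m - 2)
    (v : ℕ → Fin m → ℂ)
    (hv : ∀ j, 1 ≤ j → j ≤ m + 2 → cdet (fun t : Fin m => v (j + (t : ℕ))) = 1) :
    cdet (fun t : Fin m => vtr m v (if (t : ℕ) < a then (t : ℕ) + 2 else (t : ℕ) + 3))
      = cdet (fun t : Fin m => v (if (t : ℕ) < a + 1 then (t : ℕ) + 1 else (t : ℕ) + 2)) :=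
  stmt_6_general m a ha1 ha2 v hv
end

section
/- With the configuration (v_1, …, v_{2m+1}) and the transformed tuple (v′_1, …, v′_{2m}) as in the context, we have det(v′_j, v′_{j+1}, …, v′_{j+m−1}) = 1 for every j ∈ {1, …, m+1}; that is, the transformation preserves the property that all consecutive m×m minors equal 1. -/
/-!
A window of `m` consecutive vectors of `v′` differs from the window of `v` at the same place only
where it meets one of the modified pairs `(v′₁, v′₂) = (v₂, c v₂ - v₁)` and
`(v′_{m+1}, v′_{m+2}) = (v_{m+2}, c' v_{m+2} - v_{m+1})`. A window containing a whole pair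
changes by the unimodular column operation `(x, y) ↦ (y, c y - x)`, which preserves the
determinant. The one remaining window, `j = 2`, is `(w₁, v₃, …, v_m, v_{m+2})`. There we expand
`v₁` in the basis `v₂, …, v_{m+1}` by Cramer's rule (a three-term Plücker relation): only the
components along `v₂` and `v_{m+1}` contribute, the one along `v₂` has coefficient
`det(v₁, v₃, …, v_{m+1}) = c` and cancels against `c v₂`, and what is left is
`det(v₂, …, v_m, v₁) · det(v_{m+2}, v₃, …, v_{m+1})`, a product of two cyclically rotated
consecutive minors whose signs `(-1)^(m-1)` cancel.
-/

open Function Matrix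

lemma AlternatingMap.map_update_swap_sub {R M N ι : Type*} [CommRing R] [AddCommGroup M]
    [Module R M] [AddCommGroup N] [Module R N] [DecidableEq ι] (f : M [⋀^ι]→ₗ[R] N)
    (x : ι → M) {a b : ι} (hab : a ≠ b) (c : R) :
    f (update (update x a (x b)) b (c • x b - x a)) = f x := by
  have hswap : update (update x a (x b)) b (x a) = x ∘ Equiv.swap b a :=
    (Equiv.comp_swap_eq_update b a x).symm
  rw [f.map_update_sub, f.map_update_smul, f.map_update_update x hab, hswap,
    f.map_swap _ hab.symm]
  simp

section Alternating

variable {R : Type*} [CommRing R] {ι : Type*} [Fintype ι] [DecidableEq ι]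

local notation "D" => (detRowAlternating : (ι → R) [⋀^ι]→ₗ[R] R)

lemma sum_detRowAlternating_update_smul (P : ι → ι → R) (y : ι → R) :
    ∑ i, D (update P i y) • P i = D P • y := by
  have h := mulVec_cramer (of P)ᵀ y
  rw [det_transpose] at h
  change _ = (of P).det • y
  rw [← h]
  funext k
  simp only [Finset.sum_apply, Pi.smul_apply, smul_eq_mul, mul_comm, mulVec, dotProduct,
    transpose_apply, of_apply, cramer_transpose_apply, updateRow]
  rfl

lemma detRowAlternating_update_update_plucker (P : ι → ι → R) (hP : D P = 1) {a b : ι}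
    (hab : a ≠ b) (y z : ι → R) :
    D (update (update P a (D (update P a y) • P a - y)) b z) =
      D (update P b y) * D (update P a z) := by
  set L : (ι → R) →ₗ[R] R := (D).toMultilinearMap.toLinearMap (update P b z) a
  have hL (x : ι → R) : L x = D (update (update P a x) b z) := by
    simp [L, update_comm hab]
  have hLi (i : ι) (hia : i ≠ a) (hib : i ≠ b) : L (P i) = 0 := by
    have hi : P i = update P b z i := (update_of_ne hib z P).symm
    simp only [L, MultilinearMap.toLinearMap_apply, AlternatingMap.coe_multilinearMap]
    rw [hi, AlternatingMap.map_update_self _ _ hia.symm]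
  have hLb : L (P b) = - D (update P a z) := by
    have hswap := Equiv.comp_swap_eq_update b a (update P a z)
    rw [update_of_ne hab.symm, update_self, update_idem] at hswap
    rw [hL, ← hswap, AlternatingMap.map_swap _ _ hab.symm]
  have hLy : L y = D (update P a y) * L (P a) + D (update P b y) * L (P b) := by
    conv_lhs => rw [← one_smul R y, ← hP, ← sum_detRowAlternating_update_smul, map_sum]
    simp only [map_smul, smul_eq_mul]
    exact Fintype.sum_eq_add a b hab fun i ⟨hia, hib⟩ => by rw [hLi i hia hib, mul_zero]
  rw [← hL, map_sub, map_smul, hLy, hLb, smul_eq_mul]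
  ring

end Alternating

lemma detRowAlternating_comp_finRotate {R : Type*} [CommRing R] {n : ℕ}
    (x : Fin (n + 1) → Fin (n + 1) → R) :
    detRowAlternating (x ∘ finRotate (n + 1)) = (-1) ^ n * detRowAlternating x := by
  rw [AlternatingMap.map_perm, sign_finRotate, Units.smul_def]
  simp

lemma cdet_eq_detRowAlternating {m : ℕ} (u : Fin m → Fin m → ℂ) :
    cdet u = detRowAlternating u :=
  det_transpose (of u)

def window {α : Type*} (m : ℕ) (f : ℕ → α) (j : ℕ) : Fin m → α := fun t => f (j + t)

section Window

variable {α : Type*} {m : ℕ}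

lemma window_eq_update_update {f g : ℕ → α} {j : ℕ} {a b : Fin m} (hab : a ≠ b) {x y : α}
    (ha : f (j + a) = x) (hb : f (j + b) = y)
    (h : ∀ t : Fin m, (t : ℕ) ≠ a → (t : ℕ) ≠ b → f (j + t) = g (j + t)) :
    window m f j = update (update (window m g j) a x) b y := by
  funext t
  rcases eq_or_ne t b with rfl | htb
  · simpa [window] using hb
  rcases eq_or_ne t a with rfl | hta
  · simpa [window, update_of_ne hab] using ha
  simpa [window, update_of_ne hta, update_of_ne htb] using
    h t (Fin.val_ne_of_ne hta) (Fin.val_ne_of_ne htb)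

lemma window_comp_finRotate (f : ℕ → α) (j n : ℕ) :
    window (n + 1) f j ∘ finRotate (n + 1) =
      update (window (n + 1) f (j + 1)) (Fin.last n) (f j) := by
  funext t
  rcases eq_or_ne t (Fin.last n) with rfl | ht
  · simp [window]
  · simp only [Function.comp_apply, window, finRotate_apply, update_of_ne ht,
      Fin.val_add_one_of_lt (Fin.val_lt_last ht)]
    congr 1
    omega

lemma update_window_comp_finRotate (f : ℕ → α) (j n : ℕ) :
    update (window (n + 1) f j) 0 (f (j + n + 1)) ∘ finRotate (n + 1) =
      window (n + 1) f (j + 1) := by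
  funext t
  rcases eq_or_ne t (Fin.last n) with rfl | ht
  · simp [window, add_right_comm]
  · have h0 : finRotate (n + 1) t ≠ 0 :=
      finRotate_last (n := n) ▸ (finRotate _).injective.ne ht
    simp only [Function.comp_apply, update_of_ne h0]
    simp only [window, finRotate_apply, Fin.val_add_one_of_lt (Fin.val_lt_last ht)]
    congr 1
    omega

end Window

lemma detRowAlternating_window_eq_of_swap {R : Type*} [CommRing R] {m : ℕ}
    {f g : ℕ → Fin m → R} {j : ℕ} {a b : Fin m} (hab : a ≠ b) (c : R)
    (ha : f (j + a) = g (j + b)) (hb : f (j + b) = c • g (j + b) - g (j + a))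
    (h : ∀ t : Fin m, (t : ℕ) ≠ a → (t : ℕ) ≠ b → f (j + t) = g (j + t)) :
    detRowAlternating (window m f j) = detRowAlternating (window m g j) := by
  rw [window_eq_update_update hab ha hb h]
  exact detRowAlternating.map_update_swap_sub (window m g j) hab c

section Transform

variable {m : ℕ} (v : ℕ → Fin m → ℂ)

lemma vtr_one : vtr m v 1 = v 2 := by simp [vtr]

lemma vtr_two : vtr m v 2 = w1 m v := by simp [vtr]

lemma vtr_add_one (hm : 2 ≤ m) : vtr m v (m + 1) = v (m + 2) := by
  simp [vtr, show m ≠ 0 by omega, show m ≠ 1 by omega]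

lemma vtr_add_two (hm : 1 ≤ m) : vtr m v (m + 2) = wm1 m v := by
  simp [vtr, show m ≠ 0 by omega]

lemma vtr_of_ne {k : ℕ} (h1 : k ≠ 1) (h2 : k ≠ 2) (h3 : k ≠ m + 1) (h4 : k ≠ m + 2) :
    vtr m v k = v k := by
  simp [vtr, *]

lemma detRowAlternating_window_vtr_one (hm : 2 ≤ m) :
    detRowAlternating (window m (vtr m v) 1) = detRowAlternating (window m v 1) := by
  refine detRowAlternating_window_eq_of_swap (a := ⟨0, by omega⟩) (b := ⟨1, by omega⟩)
    (by simp) _ (vtr_one v) (vtr_two v) fun t h0 h1 => ?_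
  dsimp only at h0 h1
  have := t.isLt
  exact vtr_of_ne v (by omega) (by omega) (by omega) (by omega)

lemma detRowAlternating_window_vtr_of_three_le (hm : 2 ≤ m) {j : ℕ} (hj3 : 3 ≤ j)
    (hj : j ≤ m + 1) :
    detRowAlternating (window m (vtr m v) j) = detRowAlternating (window m v j) := by
  refine detRowAlternating_window_eq_of_swap (a := ⟨m + 1 - j, by omega⟩)
    (b := ⟨m + 2 - j, by omega⟩) (by simp [Fin.ext_iff]; omega)
    (cdet fun t : Fin m => if (t : ℕ) = 0 then v (m + 1) else v (m + 2 + t))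
    ?_ ?_ fun t ha hb => ?_
  · change vtr m v (j + (m + 1 - j)) = v (j + (m + 2 - j))
    rw [show j + (m + 1 - j) = m + 1 by omega, show j + (m + 2 - j) = m + 2 by omega]
    exact vtr_add_one v hm
  · change vtr m v (j + (m + 2 - j)) = _ • v (j + (m + 2 - j)) - v (j + (m + 1 - j))
    rw [show j + (m + 1 - j) = m + 1 by omega, show j + (m + 2 - j) = m + 2 by omega]
    exact vtr_add_two v (by omega)
  · dsimp only at ha hb
    have := t.isLt
    exact vtr_of_ne v (by omega) (by omega) (by omega) (by omega)

lemma detRowAlternating_window_vtr_two (hm : 2 ≤ m) (h1 : detRowAlternating (window m v 1) = 1)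
    (h2 : detRowAlternating (window m v 2) = 1) (h3 : detRowAlternating (window m v 3) = 1) :
    detRowAlternating (window m (vtr m v) 2) = 1 := by
  obtain ⟨n, rfl⟩ : ∃ n, m = n + 2 := ⟨m - 2, by omega⟩
  set P := window (n + 2) v 2
  have hA : cdet (fun t : Fin (n + 2) => if (t : ℕ) = 0 then v 1 else v (t + 2)) =
      detRowAlternating (update P 0 (v 1)) := by
    rw [cdet_eq_detRowAlternating]
    congr 1
    funext t
    rcases eq_or_ne t 0 with rfl | ht
    · simp
    · simp [P, window, ht, add_comm]
  have hsign : (-1 : ℂ) ^ (n + 1) * (-1) ^ (n + 1) = 1 := by rw [← mul_pow]; simp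
  have hlast : detRowAlternating (update P (Fin.last (n + 1)) (v 1)) = (-1) ^ (n + 1) := by
    rw [← window_comp_finRotate, detRowAlternating_comp_finRotate, h1, mul_one]
  have hfirst : detRowAlternating (update P 0 (v (n + 4))) = (-1) ^ (n + 1) := by
    rw [← update_window_comp_finRotate, detRowAlternating_comp_finRotate,
      show 2 + (n + 1) + 1 = n + 4 by omega] at h3
    calc _ = (-1) ^ (n + 1) * ((-1) ^ (n + 1) * detRowAlternating (update P 0 (v (n + 4)))) := by
          rw [← mul_assoc, hsign, one_mul]
      _ = (-1) ^ (n + 1) := by rw [h3, mul_one]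
  have hab : (0 : Fin (n + 2)) ≠ Fin.last (n + 1) := (Fin.last_pos).ne
  rw [window_eq_update_update hab (g := v) (y := v (n + 4))
    (x := detRowAlternating (update P 0 (v 1)) • P 0 - v 1) ?_ ?_ fun t h0 h1 => ?_]
  · rw [detRowAlternating_update_update_plucker P h2 hab, hlast, hfirst, hsign]
  · rw [← hA]
    exact vtr_two v
  · rw [Fin.val_last, show 2 + (n + 1) = n + 2 + 1 by omega]
    exact vtr_add_one v hm
  · rw [Fin.val_zero] at h0
    rw [Fin.val_last] at h1
    have := t.isLt
    exact vtr_of_ne v (by omega) (by omega) (by omega) (by omega)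

end Transform

/-- (Lemma 4.3(i), case D.)  With the configuration `v` and transformed
tuple `v′ = vtr m v` as above:  `det(v′_j, v′_{j+1}, …, v′_{j+m−1}) = 1` for every
`j ∈ {1, …, m+1}`. -/
theorem stmt_9 (m : ℕ) (hm : 2 ≤ m) (v : ℕ → Fin m → ℂ)
    (hv : ∀ j, 1 ≤ j → j ≤ m + 2 → cdet (fun t : Fin m => v (j + (t : ℕ))) = 1) :
    ∀ j, 1 ≤ j → j ≤ m + 1 → cdet (fun t : Fin m => vtr m v (j + (t : ℕ))) = 1 := by
  have hwindow (j : ℕ) (h1 : 1 ≤ j) (h2 : j ≤ m + 2) : detRowAlternating (window m v j) = 1 :=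
    (cdet_eq_detRowAlternating _).symm.trans (hv j h1 h2)
  intro j hj1 hj2
  rw [cdet_eq_detRowAlternating]
  change detRowAlternating (window m (vtr m v) j) = 1
  rcases (by omega : j = 1 ∨ j = 2 ∨ 3 ≤ j) with rfl | rfl | hj3
  · rw [detRowAlternating_window_vtr_one v hm]
    exact hwindow 1 le_rfl (by omega)
  · exact detRowAlternating_window_vtr_two v hm (hwindow 1 le_rfl (by omega))
      (hwindow 2 (by omega) (by omega)) (hwindow 3 (by omega) (by omega))
  · rw [detRowAlternating_window_vtr_of_three_le v hm hj3 hj2]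
    exact hwindow j (by omega) (by omega)
end

section
/- Let m ≥ 3 and i ∈ {2, …, m−1}. Let v_1, …, v_{m+2} ∈ ℂ^m satisfy det(v_1, v_2, …, v_m) = 1 and det(v_2, v_3, …, v_{m+1}) = 1. Then det(v_2, …, v_m, v_{m+2}) · det(v_1, …, v_i, v_{i+2}, …, v_{m+1}) − det(v_2, …, v_i, v_{i+2}, …, v_{m+2}) = det(v_1, …, v_i, v_{i+2}, …, v_m, v_{m+2}), where in each determinant the columns are the vectors indexed, in increasing order, by the sets {2,…,m}∪{m+2}, {1,…,i}∪{i+2,…,m+1}, {2,…,i}∪{i+2,…,m+2}, and {1,…,i}∪{i+2,…,m}∪{m+2}, respectively. -/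
open Equiv Matrix

lemma Fin.val_cycleIcc_last {n : ℕ} (p k : Fin (n + 1)) :
    (Fin.cycleIcc p (Fin.last n) k : ℕ)
      = if (k : ℕ) < p then (k : ℕ) else if (k : ℕ) < n then (k : ℕ) + 1 else p := by
  split_ifs with hkp hkn
  · rw [Fin.cycleIcc_of_lt hkp]
  · rw [Fin.cycleIcc_of_ge_of_lt (not_lt.mp hkp) (Fin.lt_def.mpr hkn),
      Fin.val_add_one_of_lt (Fin.lt_def.mpr hkn)]
  · rw [show k = Fin.last n from Fin.ext (by simp; omega), Fin.cycleIcc_of_last (Fin.le_last p)]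

lemma cdet_comp_perm {m : ℕ} (u : Fin m → Fin m → ℂ) (σ : Perm (Fin m)) :
    cdet (u ∘ σ) = Perm.sign σ * cdet u :=
  det_permute' σ (Matrix.of fun i j => u j i)

lemma cdet_eq_zero_of_index_eq {m : ℕ} (v : ℕ → Fin m → ℂ) (f : Fin m → ℕ) {a b : Fin m}
    (hab : a ≠ b) (h : f a = f b) : cdet (fun t => v (f t)) = 0 :=
  det_zero_of_column_eq hab fun _ => by simp [h]

/-- `f` lists the indices `g 0, …, g n` with `g p` moved to the end. -/
lemma cdet_eq_of_index_eq_move_to_last {n : ℕ} (v : ℕ → Fin (n + 1) → ℂ)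
    (f : Fin (n + 1) → ℕ) (g : ℕ → ℕ) {p : ℕ} (hp : p ≤ n)
    (hfg : ∀ t : Fin (n + 1),
      f t = g (if (t : ℕ) < p then t else if (t : ℕ) < n then t + 1 else p)) :
    cdet (fun t => v (f t)) = (-1) ^ (n - p) * cdet (fun t : Fin (n + 1) => v (g t)) := by
  have hσ : (fun t : Fin (n + 1) => v (f t))
      = (fun t : Fin (n + 1) => v (g t)) ∘ Fin.cycleIcc ⟨p, by omega⟩ (Fin.last n) := by
    funext t
    rw [Function.comp_apply, Fin.val_cycleIcc_last, hfg t]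
  rw [hσ, cdet_comp_perm, Fin.sign_cycleIcc_of_le (Fin.le_last _)]
  simp

noncomputable def cdetLastColumn {n : ℕ} (w : Fin (n + 1) → Fin (n + 1) → ℂ) :
    (Fin (n + 1) → ℂ) →ₗ[ℂ] ℂ :=
  (detRowAlternating : (Fin (n + 1) → ℂ) [⋀^Fin (n + 1)]→ₗ[ℂ] ℂ).toMultilinearMap.toLinearMap
    w (Fin.last n)

lemma cdetLastColumn_index_apply {n : ℕ} (v : ℕ → Fin (n + 1) → ℂ) (g : Fin (n + 1) → ℕ)
    (k : ℕ) :
    cdetLastColumn (fun t => v (g t)) (v k)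
      = cdet (fun t : Fin (n + 1) => v (if t < n then g t else k)) := by
  rw [cdet, ← det_transpose]
  show det _ = _
  congr 1
  ext t r
  rcases Fin.eq_castSucc_or_eq_last t with ⟨t, rfl⟩ | rfl <;> simp

lemma LinearMap.ext_of_cdet_ne_zero {m : ℕ} {f g : (Fin m → ℂ) →ₗ[ℂ] ℂ}
    (b : Fin m → Fin m → ℂ) (hb : cdet b ≠ 0) (h : ∀ j, f (b j) = g (b j)) : f = g := by
  have hli : LinearIndependent ℂ b := linearIndependent_cols_of_det_ne_zero hb
  exact (basisOfLinearIndependentOfCardEqFinrank' b hli (by simp)).ext fun j => by simpa using h j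

lemma plucker_relation_at_basis_vector {n i : ℕ} (hi1 : 1 ≤ i) (hi2 : i ≤ n)
    (v : ℕ → Fin (n + 1) → ℂ)
    (h1 : cdet (fun t : Fin (n + 1) => v (1 + (t : ℕ))) = 1)
    (h2 : cdet (fun t : Fin (n + 1) => v (2 + (t : ℕ))) = 1)
    {k : ℕ} (hk1 : 1 ≤ k) (hk2 : k ≤ n + 1) :
    cdet (fun t : Fin (n + 1) => v (if (t : ℕ) < n then (t : ℕ) + 2 else k))
      * cdet (fun t : Fin (n + 1) => v (if (t : ℕ) < i then (t : ℕ) + 1 else (t : ℕ) + 2))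
      - cdet (fun t : Fin (n + 1) => v (if (t : ℕ) < n then
          (if (t : ℕ) < i - 1 then (t : ℕ) + 2 else (t : ℕ) + 3) else k))
      = cdet (fun t : Fin (n + 1) => v (if (t : ℕ) < n then
          (if (t : ℕ) < i then (t : ℕ) + 1 else (t : ℕ) + 2) else k)) := by
  set B := cdet (fun t : Fin (n + 1) => v (if (t : ℕ) < i then (t : ℕ) + 1 else (t : ℕ) + 2))
  rcases eq_or_ne k 1 with rfl | hk_ne_one
  · have hA : cdet (fun t : Fin (n + 1) => v (if (t : ℕ) < n then (t : ℕ) + 2 else 1))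
        = (-1) ^ n := by
      rw [cdet_eq_of_index_eq_move_to_last v _ (1 + ·) (Nat.zero_le n) ?_, h1]
      · simp
      · intro t; split_ifs <;> omega
    have hC : cdet (fun t : Fin (n + 1) => v (if (t : ℕ) < n then
        (if (t : ℕ) < i - 1 then (t : ℕ) + 2 else (t : ℕ) + 3) else 1)) = (-1) ^ n * B := by
      rw [cdet_eq_of_index_eq_move_to_last v _ (fun t => if t < i then t + 1 else t + 2)
        (Nat.zero_le n) ?_]
      · simp [B]
      · intro t; split_ifs <;> omega
    have hD : cdet (fun t : Fin (n + 1) => v (if (t : ℕ) < n then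
        (if (t : ℕ) < i then (t : ℕ) + 1 else (t : ℕ) + 2) else 1)) = 0 :=
      cdet_eq_zero_of_index_eq v _ (a := 0) (b := Fin.last n) (by simp [Fin.ext_iff]; omega)
        (by simp; omega)
    rw [hA, hC, hD]
    ring
  rcases eq_or_ne k (i + 1) with rfl | hk_ne
  · have hA : cdet (fun t : Fin (n + 1) => v (if (t : ℕ) < n then (t : ℕ) + 2 else i + 1))
        = 0 :=
      cdet_eq_zero_of_index_eq v _ (a := ⟨i - 1, by omega⟩) (b := Fin.last n)
        (by simp [Fin.ext_iff]; omega) (by simp; omega)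
    have hC : cdet (fun t : Fin (n + 1) => v (if (t : ℕ) < n then
        (if (t : ℕ) < i - 1 then (t : ℕ) + 2 else (t : ℕ) + 3) else i + 1))
        = (-1) ^ (n - (i - 1)) := by
      rw [cdet_eq_of_index_eq_move_to_last v _ (2 + ·) (by omega : i - 1 ≤ n) ?_, h2]
      · simp
      · intro t; split_ifs <;> omega
    have hD : cdet (fun t : Fin (n + 1) => v (if (t : ℕ) < n then
        (if (t : ℕ) < i then (t : ℕ) + 1 else (t : ℕ) + 2) else i + 1)) = (-1) ^ (n - i) := by
      rw [cdet_eq_of_index_eq_move_to_last v _ (1 + ·) hi2 ?_, h1]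
      · simp
      · intro t; split_ifs <;> omega
    rw [hA, hC, hD, show n - (i - 1) = n - i + 1 by omega, pow_succ]
    ring
  have hA : cdet (fun t : Fin (n + 1) => v (if (t : ℕ) < n then (t : ℕ) + 2 else k)) = 0 :=
    cdet_eq_zero_of_index_eq v _ (a := ⟨k - 2, by omega⟩) (b := Fin.last n)
      (by simp [Fin.ext_iff]; omega) (by simp; omega)
  have hC : cdet (fun t : Fin (n + 1) => v (if (t : ℕ) < n then
      (if (t : ℕ) < i - 1 then (t : ℕ) + 2 else (t : ℕ) + 3) else k)) = 0 :=
    cdet_eq_zero_of_index_eq v _ (a := ⟨if k ≤ i then k - 2 else k - 3, by split_ifs <;> omega⟩)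
      (b := Fin.last n) (by simp [Fin.ext_iff]; split_ifs <;> omega) (by simp; split_ifs <;> omega)
  have hD : cdet (fun t : Fin (n + 1) => v (if (t : ℕ) < n then
      (if (t : ℕ) < i then (t : ℕ) + 1 else (t : ℕ) + 2) else k)) = 0 :=
    cdet_eq_zero_of_index_eq v _ (a := ⟨if k ≤ i then k - 1 else k - 2, by split_ifs <;> omega⟩)
      (b := Fin.last n) (by simp [Fin.ext_iff]; split_ifs <;> omega) (by simp; split_ifs <;> omega)
  rw [hA, hC, hD]
  ring

theorem stmt_10_general (m : ℕ) (i : ℕ) (hi1 : 2 ≤ i) (hi2 : i ≤ m - 1)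
    (v : ℕ → Fin m → ℂ)
    (h1 : cdet (fun t : Fin m => v (1 + (t : ℕ))) = 1)
    (h2 : cdet (fun t : Fin m => v (2 + (t : ℕ))) = 1) :
    cdet (fun t : Fin m => v (if (t : ℕ) < m - 1 then (t : ℕ) + 2 else m + 2))
      * cdet (fun t : Fin m => v (if (t : ℕ) < i then (t : ℕ) + 1 else (t : ℕ) + 2))
      - cdet (fun t : Fin m => v (if (t : ℕ) < i - 1 then (t : ℕ) + 2 else (t : ℕ) + 3))
      = cdet (fun t : Fin m => v (if (t : ℕ) < i then (t : ℕ) + 1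
          else if (t : ℕ) < m - 1 then (t : ℕ) + 2 else m + 2)) := by
  obtain ⟨n, rfl⟩ : ∃ n, m = n + 1 := ⟨m - 1, by omega⟩
  rw [Nat.add_sub_cancel] at hi2 ⊢
  set B := cdet (fun t : Fin (n + 1) => v (if (t : ℕ) < i then (t : ℕ) + 1 else (t : ℕ) + 2))
  have hforms : B • cdetLastColumn (fun t => v (t + 2))
      - cdetLastColumn (fun t => v (if t < i - 1 then t + 2 else t + 3))
      = cdetLastColumn (fun t => v (if t < i then t + 1 else t + 2)) :=
    LinearMap.ext_of_cdet_ne_zero (fun j => v (1 + j)) (by rw [h1]; exact one_ne_zero) fun j => by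
      simpa [cdetLastColumn_index_apply, mul_comm B] using
        plucker_relation_at_basis_vector (by omega) hi2 v h1 h2 (k := 1 + j) (by omega) (by omega)
  have hlast := LinearMap.congr_fun hforms (v (n + 1 + 2))
  simp only [LinearMap.sub_apply, LinearMap.smul_apply, smul_eq_mul,
    cdetLastColumn_index_apply] at hlast
  rw [mul_comm]
  convert hlast using 4
  · congr 1
    split_ifs <;> omega
  · split_ifs <;> omega

/-- Let `m ≥ 3`, `2 ≤ i ≤ m−1`, and `v_1, …, v_{m+2} ∈ ℂ^m` with
`det(v_1, …, v_m) = 1` and `det(v_2, …, v_{m+1}) = 1`.  Then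
`det(v_2,…,v_m,v_{m+2}) · det(v_1,…,v_i,v_{i+2},…,v_{m+1}) − det(v_2,…,v_i,v_{i+2},…,v_{m+2})
  = det(v_1,…,v_i,v_{i+2},…,v_m,v_{m+2})`,
where in each determinant the columns are indexed, in increasing order, by the sets
`{2,…,m}∪{m+2}`, `{1,…,i}∪{i+2,…,m+1}`, `{2,…,i}∪{i+2,…,m+2}` and
`{1,…,i}∪{i+2,…,m}∪{m+2}` respectively. -/
theorem stmt_10 (m : ℕ) (hm : 3 ≤ m) (i : ℕ) (hi1 : 2 ≤ i) (hi2 : i ≤ m - 1)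
    (v : ℕ → Fin m → ℂ)
    (h1 : cdet (fun t : Fin m => v (1 + (t : ℕ))) = 1)
    (h2 : cdet (fun t : Fin m => v (2 + (t : ℕ))) = 1) :
    cdet (fun t : Fin m => v (if (t : ℕ) < m - 1 then (t : ℕ) + 2 else m + 2))
      * cdet (fun t : Fin m => v (if (t : ℕ) < i then (t : ℕ) + 1 else (t : ℕ) + 2))
      - cdet (fun t : Fin m => v (if (t : ℕ) < i - 1 then (t : ℕ) + 2 else (t : ℕ) + 3))
      = cdet (fun t : Fin m => v (if (t : ℕ) < i then (t : ℕ) + 1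
          else if (t : ℕ) < m - 1 then (t : ℕ) + 2 else m + 2)) :=
  stmt_10_general m i hi1 hi2 v h1 h2
end

section
/- For every (a, b, c) ∈ ℕ³, the modified Saito reflection T̃_1 is defined at (a, b, c) (i.e., all intermediate operator applications are defined) and T̃_1(a, b, c) = (min(a,c), b + max(a−c, 0), 0); equivalently, T̃_1(a[2] + b[1,2] + c[1]) = min(a,c)[2] + (b + max(a−c,0))[1,2]. -/
/-- A triple `(a, b, c) ∈ ℕ³`, identified with the multisegment `a[2] + b[1,2] + c[1]`
of type `A₂`. -/
abbrev T3 := ℕ × ℕ × ℕ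

/-- `f̃_1(a,b,c) := (a,b,c+1)` if `a ≤ c`, and `(a−1,b+1,c)` if `a > c`. -/
def ftil1 (x : T3) : T3 :=
  if x.1 ≤ x.2.2 then (x.1, x.2.1, x.2.2 + 1) else (x.1 - 1, x.2.1 + 1, x.2.2)

/-- `ẽ_1(a,b,c) := (a,b,c−1)` if `a < c`; `(a+1,b−1,c)` if `b > 0` and `a ≥ c`;
undefined if `b = 0` and `a ≥ c`. -/
def etil1 (x : T3) : Option T3 :=
  if x.1 < x.2.2 then some (x.1, x.2.1, x.2.2 - 1)
  else if 0 < x.2.1 then some (x.1 + 1, x.2.1 - 1, x.2.2) else none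

/-- `f̃_2(a,b,c) := (a+1,b,c)`. -/
def ftil2 (x : T3) : T3 := (x.1 + 1, x.2.1, x.2.2)

/-- `ẽ_2(a,b,c) := (a−1,b,c)` if `a > 0`, undefined if `a = 0`. -/
def etil2 (x : T3) : Option T3 :=
  if 0 < x.1 then some (x.1 - 1, x.2.1, x.2.2) else none

/-- `f̃*_1(a,b,c) := (a,b,c+1)`. -/
def fstar1 (x : T3) : T3 := (x.1, x.2.1, x.2.2 + 1)

/-- `ẽ*_1(a,b,c) := (a,b,c−1)` if `c > 0`, undefined if `c = 0`. -/
def estar1 (x : T3) : Option T3 :=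
  if 0 < x.2.2 then some (x.1, x.2.1, x.2.2 - 1) else none

/-- `f̃*_2(a,b,c) := (a+1,b,c)` if `a ≥ c`, and `(a,b+1,c−1)` if `a < c`. -/
def fstar2 (x : T3) : T3 :=
  if x.2.2 ≤ x.1 then (x.1 + 1, x.2.1, x.2.2) else (x.1, x.2.1 + 1, x.2.2 - 1)

/-- `ẽ*_2(a,b,c) := (a−1,b,c)` if `a > c`; `(a,b−1,c+1)` if `b > 0` and `a ≤ c`;
undefined if `b = 0` and `a ≤ c`. -/
def estar2 (x : T3) : Option T3 :=
  if x.2.2 < x.1 then some (x.1 - 1, x.2.1, x.2.2)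
  else if 0 < x.2.1 then some (x.1, x.2.1 - 1, x.2.2 + 1) else none

/-- `ε_1(a,b,c) := b + max(c−a, 0)`. -/
def eps1 (x : T3) : ℕ := x.2.1 + (x.2.2 - x.1)

/-- `ε_2(a,b,c) := a`. -/
def eps2 (x : T3) : ℕ := x.1

/-- `ε*_1(a,b,c) := c`. -/
def epsStar1 (x : T3) : ℕ := x.2.2

/-- `ε*_2(a,b,c) := b + max(a−c, 0)`. -/
def epsStar2 (x : T3) : ℕ := x.2.1 + (x.1 - x.2.2)

/-- Iteration of a partially defined operator: `iterO f k x` is the result of applying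
`f` to `x` `k` times in succession, defined exactly when every intermediate result is
defined. -/
def iterO (f : T3 → Option T3) : ℕ → T3 → Option T3
  | 0, x => some x
  | k + 1, x => (f x).bind (iterO f k)

/-- `φ*_1(a,b,c) := a − b − c` (as an integer). -/
def phiStar1 (x : T3) : ℤ := (x.1 : ℤ) - x.2.1 - x.2.2

/-- `φ*_2(a,b,c) := max(a−c, 0) + c − 2a` (as an integer). -/
def phiStar2 (x : T3) : ℤ := max ((x.1 : ℤ) - x.2.2) 0 + x.2.2 - 2 * x.1

/-- The Saito reflection `S_1(x) := f̃_1^{φ*_1(x)}(ẽ*_1^{ε*_1(x)}(x))`, defined when all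
intermediate applications are defined (in particular the exponent `φ*_1(x)` must be
nonnegative). -/
def saito1 (x : T3) : Option T3 :=
  if 0 ≤ phiStar1 x then (iterO estar1 (epsStar1 x) x).map (ftil1^[(phiStar1 x).toNat])
  else none

/-- The Saito reflection `S_2(x) := f̃_2^{φ*_2(x)}(ẽ*_2^{ε*_2(x)}(x))`, defined when all
intermediate applications are defined. -/
def saito2 (x : T3) : Option T3 :=
  if 0 ≤ phiStar2 x then (iterO estar2 (epsStar2 x) x).map (ftil2^[(phiStar2 x).toNat])
  else none

/-- The modified Saito reflection `T̃_1(x) := S_1(ẽ_1^{ε_1(x)}(x))`. -/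
def tsaito1 (x : T3) : Option T3 := (iterO etil1 (eps1 x) x).bind saito1

/-- The modified Saito reflection `T̃_2(x) := S_2(ẽ_2^{ε_2(x)}(x))`. -/
def tsaito2 (x : T3) : Option T3 := (iterO etil2 (eps2 x) x).bind saito2

/-
Lowering with `ẽ_1` first strips the `c - a` excess segments `[1]` and then converts every
`[1,2]` into a `[2]`, so `ẽ_1^{ε_1}(a,b,c) = (a+b, 0, min(a,c))`. On such a point `S_1` removes
the `min(a,c)` segments `[1]` with `ẽ*_1` and then `f̃_1` turns `a + b - min(a,c)` of the
segments `[2]` into `[1,2]`.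
-/

lemma iterO_add (f : T3 → Option T3) (m n : ℕ) (x : T3) :
    iterO f (m + n) x = (iterO f m x).bind (iterO f n) := by
  induction m generalizing x with
  | zero => simp [iterO]
  | succ m ih =>
    rw [Nat.add_right_comm]
    simp only [iterO, Option.bind_assoc]
    cases f x <;> simp [ih]

lemma iterO_etil1_lower (a b d : ℕ) :
    iterO etil1 d (a, b, a + d) = some (a, b, a) := by
  induction d with
  | zero => rfl
  | succ d ih => simpa [iterO, etil1] using ih

lemma iterO_etil1_raise (a b c : ℕ) (h : c ≤ a) :
    iterO etil1 b (a, b, c) = some (a + b, 0, c) := by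
  induction b generalizing a with
  | zero => rfl
  | succ b ih =>
    have hstep : etil1 (a, b + 1, c) = some (a + 1, b, c) := by
      simp [etil1, Nat.not_lt.mpr h]
    rw [iterO, hstep, Option.bind_some, ih (a + 1) (by omega), Nat.add_right_comm,
      Nat.add_assoc]

lemma iterO_etil1_eps1 (a b c : ℕ) :
    iterO etil1 (eps1 (a, b, c)) (a, b, c) = some (a + b, 0, min a c) := by
  rcases le_total a c with h | h
  · obtain ⟨d, rfl⟩ := Nat.exists_eq_add_of_le h
    rw [eps1, Nat.add_sub_cancel_left, Nat.add_comm b, iterO_add, iterO_etil1_lower,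
      Option.bind_some, iterO_etil1_raise _ _ _ le_rfl, min_eq_left h]
  · rw [eps1, Nat.sub_eq_zero_of_le h, Nat.add_zero, iterO_etil1_raise _ _ _ h, min_eq_right h]

lemma iterO_estar1 (a b c : ℕ) : iterO estar1 c (a, b, c) = some (a, b, 0) := by
  induction c with
  | zero => rfl
  | succ c ih => simpa [iterO, estar1] using ih

lemma ftil1_iterate (k m b : ℕ) : ftil1^[k] (m + k, b, 0) = (m, b + k, 0) := by
  induction k generalizing b with
  | zero => rfl
  | succ k ih =>
    have hstep : ftil1 (m + (k + 1), b, 0) = (m + k, b + 1, 0) := by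
      simp [ftil1]
    rw [Function.iterate_succ_apply, hstep, ih, Nat.add_assoc, Nat.add_comm 1]

lemma saito1_of_le {n m : ℕ} (h : m ≤ n) : saito1 (n, 0, m) = some (m, n - m, 0) := by
  obtain ⟨k, rfl⟩ := Nat.exists_eq_add_of_le h
  have hphi : phiStar1 (m + k, 0, m) = k := by simp [phiStar1]
  rw [saito1, hphi, if_pos (Int.natCast_nonneg k), epsStar1, iterO_estar1, Option.map_some,
    Int.toNat_natCast, ftil1_iterate, Nat.zero_add, Nat.add_sub_cancel_left]

/-- For every `(a,b,c) ∈ ℕ³`, the modified Saito reflection `T̃_1` is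
defined at `(a,b,c)` and `T̃_1(a,b,c) = (min(a,c), b + max(a−c,0), 0)`. -/
theorem stmt_14 (a b c : ℕ) :
    tsaito1 (a, b, c) = some (min a c, b + (a - c), 0) := by
  rw [tsaito1, iterO_etil1_eps1, Option.bind_some,
    saito1_of_le ((min_le_left a c).trans (Nat.le_add_right a b))]
  congr 3
  omega
end

section
/- For every (a, b, c) ∈ ℕ³, the modified Saito reflection T̃_2 is defined at (a, b, c) (i.e., all intermediate operator applications are defined) and T̃_2(a, b, c) = (c, 0, b + c); equivalently, T̃_2(a[2] + b[1,2] + c[1]) = c[2] + (b + c)[1]. -/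
/-! `ẽ_2` strips all `a` copies of `[2]`; at `(0, b, c)` we have `a ≤ c`, so each of the
`ε*_2 = b` applications of `ẽ*_2` turns a `[1,2]` into a `[1]`; finally `φ*_2 = c`, so `f̃_2`
adds `c` copies of `[2]`. -/

lemma iterO_etil2 (k a b c : ℕ) : iterO etil2 k (a + k, b, c) = some (a, b, c) := by
  induction k with
  | zero => rfl
  | succ k ih => simpa [iterO, etil2, ← add_assoc] using ih

lemma iterO_estar2_of_fst_eq_zero (k b c : ℕ) :
    iterO estar2 k (0, b + k, c) = some (0, b, c + k) := by
  induction k generalizing c with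
  | zero => rfl
  | succ k ih => simpa [iterO, estar2, ← add_assoc, add_right_comm c] using ih (c + 1)

lemma ftil2_iterate (k a b c : ℕ) : ftil2^[k] (a, b, c) = (a + k, b, c) := by
  induction k generalizing a with
  | zero => rfl
  | succ k ih => simp [Function.iterate_succ_apply, ftil2, ih]; omega

lemma saito2_of_fst_eq_zero (b c : ℕ) : saito2 (0, b, c) = some (c, 0, b + c) := by
  have hphi : phiStar2 (0, b, c) = c := by simp [phiStar2]
  have hestar : iterO estar2 (epsStar2 (0, b, c)) (0, b, c) = some (0, 0, c + b) := by
    simpa [epsStar2] using iterO_estar2_of_fst_eq_zero b 0 c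
  simp [saito2, hphi, hestar, ftil2_iterate, add_comm c b]

/-- For every `(a,b,c) ∈ ℕ³`, the modified Saito reflection `T̃_2` is
defined at `(a,b,c)` and `T̃_2(a,b,c) = (c, 0, b + c)`. -/
theorem stmt_15 (a b c : ℕ) :
    tsaito2 (a, b, c) = some (c, 0, b + c) := by
  have hetil : iterO etil2 (eps2 (a, b, c)) (a, b, c) = some (0, b, c) := by
    simpa [eps2] using iterO_etil2 a 0 b c
  rw [tsaito2, hetil, Option.bind_some, saito2_of_fst_eq_zero]
end
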